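/- Let 0 < b < 1 and suppose f : R^3 → [0, ∞) is measurable with ‖f‖_{L^∞_w} := sup_p |p| e^{|p|} f(p) < ∞. Then for any fixed nonzero p ∈ R^3, ∫_{R^3} f(q) / (|q|^{1 + b/2} · sin^b(φ/2)) dq ≤ C ‖f‖_{L^∞_w}, where φ is the angle between p and q, and C depends only on b. -/

import Mathlib

/-!
Rotate `p` to the first basis vector and write `q = (x₀, x₁, x₂)`, `n = |q|` and
`ρ = √(x₁² + x₂²) = n sin φ`. Since `sin φ ≤ 2 sin (φ/2)` and `f q ≤ M e^{-n} / n`, the integrand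
is at most `2^b M e^{-n} / (n^{2 - b/2} ρ^b)`. With `γ = 2/3 + b/6`, so that `3γ = 2 + b/2`, this
is dominated off the coordinate hyperplanes by `2^b M ∏ᵢ e^{-|xᵢ|/3} / |xᵢ|^γ`. As `γ < 1`, each
factor is integrable on `ℝ`, and Fubini bounds the integral by `2^b M (∫ e^{-|t|/3} / |t|^γ dt)³`.
-/

open MeasureTheory Real Set InnerProductGeometry

theorem integrable_comp_abs_of_integrableOn_Ioi {g : ℝ → ℝ} (hg : IntegrableOn g (Ioi 0)) :
    Integrable fun t => g |t| := by
  have hpos : IntegrableOn (fun t => g |t|) (Ioi 0) :=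
    hg.congr_fun (fun t ht => by rw [abs_of_pos ht]) measurableSet_Ioi
  rw [← integrableOn_univ, ← Iio_union_Ici (a := (0 : ℝ)), integrableOn_union,
    integrableOn_Ici_iff_integrableOn_Ioi]
  refine ⟨?_, hpos⟩
  rw [← (Measure.measurePreserving_neg (volume : Measure ℝ)).integrableOn_comp_preimage
    (Homeomorph.neg ℝ).measurableEmbedding]
  simpa only [Function.comp_def, abs_neg, neg_preimage, neg_Iio, neg_zero] using hpos

theorem integrable_exp_neg_mul_abs_div_abs_rpow {c γ : ℝ} (hc : 0 < c) (hγ : γ < 1) :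
    Integrable fun t : ℝ => exp (-c * |t|) / |t| ^ γ := by
  refine integrable_comp_abs_of_integrableOn_Ioi (g := fun t => exp (-c * t) / t ^ γ) ?_
  refine (integrableOn_rpow_mul_exp_neg_mul_rpow (s := -γ) (by linarith) one_pos hc).congr_fun
    (fun t ht => ?_) measurableSet_Ioi
  simp only [rpow_one, rpow_neg (le_of_lt ht)]
  ring

noncomputable def coordWeight (γ t : ℝ) : ℝ := exp (-|t| / 3) / |t| ^ γ

theorem integrable_coordWeight {γ : ℝ} (hγ : γ < 1) : Integrable (coordWeight γ) := by
  convert integrable_exp_neg_mul_abs_div_abs_rpow (c := 1 / 3) (by norm_num) hγ using 3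
  rw [coordWeight]
  ring_nf

theorem ae_forall_ne_zero {ι : Type*} [Fintype ι] : ∀ᵐ x : ι → ℝ, ∀ i, x i ≠ 0 := by
  refine ae_all_iff.2 fun i => ?_
  rw [ae_iff, volume_pi]
  simpa using Measure.pi_hyperplane (fun _ : ι => (volume : Measure ℝ)) i 0

theorem sin_le_two_mul_sin_half {φ : ℝ} (h0 : 0 ≤ φ) (hπ : φ ≤ π) :
    sin φ ≤ 2 * sin (φ / 2) := by
  have hs : 0 ≤ sin (φ / 2) := sin_nonneg_of_nonneg_of_le_pi (by linarith) (by linarith)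
  calc sin φ = 2 * sin (φ / 2) * cos (φ / 2) := by rw [← sin_two_mul]; ring_nf
    _ ≤ 2 * sin (φ / 2) * 1 := by gcongr; exact cos_le_one _
    _ = 2 * sin (φ / 2) := mul_one _

theorem rpow_mul_mul_sin_rpow_le {b n φ : ℝ} (hb : 0 ≤ b) (hn : 0 ≤ n) (h0 : 0 ≤ φ)
    (hπ : φ ≤ π) :
    n ^ (1 - b / 2) * (n * sin φ) ^ b ≤ 2 ^ b * (n ^ (1 + b / 2) * sin (φ / 2) ^ b) := by
  have hs : 0 ≤ sin φ := sin_nonneg_of_nonneg_of_le_pi h0 hπ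
  have hs2 : 0 ≤ sin (φ / 2) := sin_nonneg_of_nonneg_of_le_pi (by linarith) (by linarith)
  calc n ^ (1 - b / 2) * (n * sin φ) ^ b ≤ n ^ (1 - b / 2) * (n * (2 * sin (φ / 2))) ^ b := by
        gcongr; exact sin_le_two_mul_sin_half h0 hπ
    _ = 2 ^ b * (n ^ (1 - b / 2 + b) * sin (φ / 2) ^ b) := by
        rw [rpow_add' hn (by linarith), mul_rpow hn (by positivity), mul_rpow zero_le_two hs2]
        ring
    _ = 2 ^ b * (n ^ (1 + b / 2) * sin (φ / 2) ^ b) := by ring_nf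

theorem InnerProductGeometry.norm_mul_sin_angle {E : Type*} [NormedAddCommGroup E]
    [InnerProductSpace ℝ E] {u : E} (hu : ‖u‖ = 1) (q : E) :
    ‖q‖ * sin (angle u q) = √(‖q‖ ^ 2 - inner ℝ u q ^ 2) := by
  have h := sin_angle_mul_norm_mul_norm u q
  rw [real_inner_self_eq_norm_sq, real_inner_self_eq_norm_sq, hu, one_pow, one_mul, one_mul,
    ← sq] at h
  rw [mul_comm, h]

theorem InnerProductGeometry.sin_angle_div_two_nonneg {E : Type*} [NormedAddCommGroup E]
    [InnerProductSpace ℝ E] (u q : E) : 0 ≤ sin (angle u q / 2) :=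
  sin_nonneg_of_nonneg_of_le_pi (by linarith [angle_nonneg u q])
    (by linarith [angle_le_pi u q, pi_pos])

theorem exists_linearIsometryEquiv_apply_eq_of_norm_eq {E : Type*} [NormedAddCommGroup E]
    [InnerProductSpace ℝ E] {u v : E} (h : ‖u‖ = ‖v‖) : ∃ e : E ≃ₗᵢ[ℝ] E, e u = v :=
  ⟨_, Submodule.reflection_sub h⟩

theorem abs_mul_abs_mul_abs_rpow_le {b n ρ x y z : ℝ} (hb : 0 ≤ b) (hb2 : b ≤ 2)
    (hx : |x| ≤ n) (hy : |y| ≤ ρ) (hz : |z| ≤ ρ) (hρn : ρ ≤ n) :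
    (|x| * |y| * |z|) ^ (2 / 3 + b / 6) ≤ n ^ (2 - b / 2) * ρ ^ b := by
  have hρ : 0 ≤ ρ := (abs_nonneg y).trans hy
  have hn : 0 ≤ n := hρ.trans hρn
  calc (|x| * |y| * |z|) ^ (2 / 3 + b / 6) ≤ (n * ρ * ρ) ^ (2 / 3 + b / 6) := by gcongr
    _ = n ^ (2 / 3 + b / 6) * ρ ^ (4 / 3 - 2 * b / 3) * ρ ^ b := by
        rw [mul_rpow (by positivity) hρ, mul_rpow hn hρ, mul_assoc,
          ← rpow_add' hρ (by linarith), mul_assoc, ← rpow_add' hρ (by linarith)]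
        ring_nf
    _ ≤ n ^ (2 / 3 + b / 6) * n ^ (4 / 3 - 2 * b / 3) * ρ ^ b := by gcongr; linarith
    _ = n ^ (2 - b / 2) * ρ ^ b := by rw [← rpow_add' hn (by linarith)]; ring_nf

theorem exp_neg_sqrt_div_le_coordWeight_mul {b x y z : ℝ} (hb : 0 ≤ b) (hb2 : b ≤ 2)
    (hx : x ≠ 0) (hy : y ≠ 0) (hz : z ≠ 0) :
    exp (-√(x ^ 2 + y ^ 2 + z ^ 2)) /
        (√(x ^ 2 + y ^ 2 + z ^ 2) ^ (2 - b / 2) * √(y ^ 2 + z ^ 2) ^ b)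
      ≤ coordWeight (2 / 3 + b / 6) x * coordWeight (2 / 3 + b / 6) y *
        coordWeight (2 / 3 + b / 6) z := by
  set n := √(x ^ 2 + y ^ 2 + z ^ 2)
  set ρ := √(y ^ 2 + z ^ 2)
  have hxn : |x| ≤ n := abs_le_sqrt (by nlinarith)
  have hyρ : |y| ≤ ρ := abs_le_sqrt (by nlinarith)
  have hzρ : |z| ≤ ρ := abs_le_sqrt (by nlinarith)
  have hρn : ρ ≤ n := sqrt_le_sqrt (by nlinarith)
  have hexp : exp (-n) ≤ exp (-(|x| + |y| + |z|) / 3) := exp_le_exp.2 (by linarith)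
  unfold coordWeight
  rw [div_mul_div_comm, div_mul_div_comm, ← exp_add, ← exp_add,
    ← mul_rpow (by positivity) (by positivity), ← mul_rpow (by positivity) (by positivity)]
  exact div_le_div₀ (by positivity) (hexp.trans_eq (by ring_nf)) (by positivity)
    (abs_mul_abs_mul_abs_rpow_le hb hb2 hxn hyρ hzρ hρn)

theorem div_rpow_sin_half_angle_le_prod_coordWeight {b M : ℝ} (hb : 0 ≤ b) (hb2 : b ≤ 2)
    {f : EuclideanSpace ℝ (Fin 3) → ℝ} (hf0 : ∀ q, 0 ≤ f q)
    (hfM : ∀ q, ‖q‖ * exp ‖q‖ * f q ≤ M) {x : Fin 3 → ℝ} (hx : ∀ i, x i ≠ 0) :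
    f (WithLp.toLp 2 x) / (‖WithLp.toLp 2 x‖ ^ (1 + b / 2) *
        sin (angle (EuclideanSpace.single 0 1) (WithLp.toLp 2 x) / 2) ^ b)
      ≤ 2 ^ b * M * ∏ i, coordWeight (2 / 3 + b / 6) (x i) := by
  set q : EuclideanSpace ℝ (Fin 3) := WithLp.toLp 2 x
  set n := √(x 0 ^ 2 + x 1 ^ 2 + x 2 ^ 2)
  set ρ := √(x 1 ^ 2 + x 2 ^ 2)
  have hM : 0 ≤ M := by simpa using hfM 0
  have hn : ‖q‖ = n := by
    rw [EuclideanSpace.norm_eq, Fin.sum_univ_three]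
    simp [q, n]
  have hρ : ‖q‖ * sin (angle (EuclideanSpace.single 0 1) q) = ρ := by
    rw [norm_mul_sin_angle (by simp), hn, sq_sqrt (by positivity)]
    simp [q, ρ, EuclideanSpace.inner_single_left]
    ring_nf
  have hn0 : 0 < n := sqrt_pos.2 (by have := hx 0; positivity)
  have hρ0 : 0 < ρ := sqrt_pos.2 (by have := hx 1; positivity)
  have hD := rpow_mul_mul_sin_rpow_le hb (norm_nonneg q)
    (angle_nonneg (EuclideanSpace.single 0 1) q) (angle_le_pi _ q)
  rw [hρ, hn] at hD
  rw [hn]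
  calc f q / (n ^ (1 + b / 2) * sin (angle (EuclideanSpace.single 0 1) q / 2) ^ b)
      ≤ f q / (n ^ (1 - b / 2) * ρ ^ b / 2 ^ b) :=
        div_le_div_of_nonneg_left (hf0 q) (by positivity) (by rwa [div_le_iff₀' (by positivity)])
    _ = 2 ^ b * (n * exp n * f q) * (exp (-n) / (n ^ (2 - b / 2) * ρ ^ b)) := by
        rw [show 2 - b / 2 = 1 + (1 - b / 2) by ring, rpow_add hn0, rpow_one, exp_neg]
        field_simp
    _ ≤ 2 ^ b * M * (exp (-n) / (n ^ (2 - b / 2) * ρ ^ b)) := by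
        gcongr
        rw [← hn]
        exact hfM q
    _ ≤ 2 ^ b * M * ∏ i, coordWeight (2 / 3 + b / 6) (x i) := by
        rw [Fin.prod_univ_three]
        gcongr
        exact exp_neg_sqrt_div_le_coordWeight_mul hb hb2 (hx 0) (hx 1) (hx 2)

theorem integral_div_rpow_sin_half_angle_single_le {b M : ℝ} (hb : 0 ≤ b) (hb2 : b < 2)
    {f : EuclideanSpace ℝ (Fin 3) → ℝ} (hf0 : ∀ q, 0 ≤ f q)
    (hfM : ∀ q, ‖q‖ * exp ‖q‖ * f q ≤ M) :
    ∫ q, f q / (‖q‖ ^ (1 + b / 2) * sin (angle (EuclideanSpace.single 0 1) q / 2) ^ b)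
      ≤ 2 ^ b * M * (∫ t, coordWeight (2 / 3 + b / 6) t) ^ 3 := by
  have hw := integrable_coordWeight (γ := 2 / 3 + b / 6) (by linarith)
  rw [← (PiLp.volume_preserving_toLp (Fin 3)).integral_comp
    (MeasurableEquiv.toLp 2 (Fin 3 → ℝ)).measurableEmbedding]
  calc _ ≤ ∫ x : Fin 3 → ℝ, 2 ^ b * M * ∏ i, coordWeight (2 / 3 + b / 6) (x i) := by
        refine integral_mono_of_nonneg (.of_forall fun x => ?_)
          ((Integrable.fintype_prod fun _ => hw).const_mul _) ?_
        · have := sin_angle_div_two_nonneg (EuclideanSpace.single 0 1) (WithLp.toLp 2 x)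
          have := hf0 (WithLp.toLp 2 x)
          positivity
        · filter_upwards [ae_forall_ne_zero] with x hx
          exact div_rpow_sin_half_angle_le_prod_coordWeight hb hb2.le hf0 hfM hx
    _ = 2 ^ b * M * (∫ t, coordWeight (2 / 3 + b / 6) t) ^ 3 := by
        rw [integral_const_mul, integral_fintype_prod_volume_eq_pow, Fintype.card_fin]

/-- For `0 < b < 1` there is a constant `C > 0` depending only on `b` such that: for any
measurable `f : ℝ³ → [0,∞)` with weighted sup bound `|q| e^{|q|} f(q) ≤ M` and any
nonzero `p ∈ ℝ³`, `∫ f(q)/(|q|^{1+b/2} sin^b(φ/2)) dq ≤ C M`, where `φ` is the angle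
between `p` and `q`. -/
theorem stmt15 (b : ℝ) (hb : 0 < b) (hb1 : b < 1) :
    ∃ C > 0, ∀ (f : EuclideanSpace ℝ (Fin 3) → ℝ) (M : ℝ),
      Measurable f → (∀ q, 0 ≤ f q) →
      (∀ q, ‖q‖ * Real.exp ‖q‖ * f q ≤ M) →
      ∀ p : EuclideanSpace ℝ (Fin 3), p ≠ 0 →
        (∫ q : EuclideanSpace ℝ (Fin 3),
            f q / (‖q‖ ^ (1 + b / 2) *
              Real.sin (InnerProductGeometry.angle p q / 2) ^ b))
          ≤ C * M := by
  set I := ∫ t, coordWeight (2 / 3 + b / 6) t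
  have hI : 0 ≤ I := integral_nonneg fun t => by unfold coordWeight; positivity
  refine ⟨2 ^ b * I ^ 3 + 1, by positivity, fun f M _ hf0 hfM p hp => ?_⟩
  have hM : 0 ≤ M := by simpa using hfM 0
  set e₀ : EuclideanSpace ℝ (Fin 3) := EuclideanSpace.single 0 1
  obtain ⟨e, he⟩ := exists_linearIsometryEquiv_apply_eq_of_norm_eq (u := p) (v := ‖p‖ • e₀)
    (by simp [norm_smul, e₀])
  have hangle : ∀ q, angle p q = angle e₀ (e q) := fun q => by
    rw [← e.toLinearIsometry.angle_map p q, LinearIsometryEquiv.coe_toLinearIsometry, he,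
      angle_smul_left_of_pos _ _ (norm_pos_iff.2 hp)]
  calc ∫ q, f q / (‖q‖ ^ (1 + b / 2) * sin (angle p q / 2) ^ b)
      = ∫ q, f (e.symm q) / (‖q‖ ^ (1 + b / 2) * sin (angle e₀ q / 2) ^ b) := by
        conv_rhs => rw [← e.measurePreserving.integral_comp e.toHomeomorph.measurableEmbedding]
        simp [hangle]
    _ ≤ 2 ^ b * M * I ^ 3 :=
        integral_div_rpow_sin_half_angle_single_le hb.le (by linarith) (fun q => hf0 _)
          (fun q => by simpa using hfM (e.symm q))
    _ ≤ (2 ^ b * I ^ 3 + 1) * M := by nlinarith [show 0 ≤ 2 ^ b * I ^ 3 by positivity]
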